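/- Every 5-dimensional naturally graded quasi-filiform complex Zinbiel algebra of type A_(3) is isomorphic to the algebra with basis e_1, …, e_5 and products e_1∘e_2 = e_3, e_2∘e_1 = −e_3, e_1∘e_3 = e_4, e_2∘e_3 = e_5, all other products of basis vectors being zero. -/

import Mathlib

/-- A complex Zinbiel algebra structure on the module `A`: a bilinear
multiplication satisfying `(x∘y)∘z = x∘(y∘z) + x∘(z∘y)`. -/
structure ZinbielStr (A : Type*) [AddCommGroup A] [Module ℂ A] where
  mul : A →ₗ[ℂ] A →ₗ[ℂ] A
  zinbiel : ∀ x y z : A, mul (mul x y) z = mul x (mul y z) + mul x (mul z y)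

namespace ZinbielStr

variable {A : Type*} [AddCommGroup A] [Module ℂ A]

/-- `M.lcs k` is the term `A^k` of the lower central series for `k ≥ 1`
(`A^1 = A`, `A^{k+1} = span (A ∘ A^k)`), with the convention `M.lcs 0 = ⊤`. -/
def lcs (M : ZinbielStr A) : ℕ → Submodule ℂ A
  | 0 => ⊤
  | 1 => ⊤
  | k + 2 => Submodule.span ℂ {z | ∃ a b, b ∈ lcs M (k + 1) ∧ z = M.mul a b}

/-- A Zinbiel algebra is nilpotent when some term of the lower central series vanishes. -/
def IsNilpotent (M : ZinbielStr A) : Prop := ∃ s, 1 ≤ s ∧ M.lcs s = ⊥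

/-- `Ag` is a natural grading of `M` with parts `Ag 1, …, Ag t`:
the parts are independent, `A_i ∘ A_j ⊆ A_{i+j}` (with `A_k = 0` for `k > t` and `k = 0`),
and `A^k = A_k ⊕ A_{k+1} ⊕ ⋯ ⊕ A_t` for all `1 ≤ k ≤ t`. -/
structure IsNaturalGrading (M : ZinbielStr A) (t : ℕ) (Ag : ℕ → Submodule ℂ A) : Prop where
  zero_deg : Ag 0 = ⊥
  high_deg : ∀ k, t < k → Ag k = ⊥
  indep : iSupIndep Ag
  mul_mem : ∀ i j x y, x ∈ Ag i → y ∈ Ag j → M.mul x y ∈ Ag (i + j)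
  lcs_eq : ∀ k, 1 ≤ k → k ≤ t → M.lcs k = ⨆ j, ⨆ (_ : k ≤ j), Ag j

/-- An `n`-dimensional Zinbiel algebra is quasi-filiform if `A^{n-2} ≠ 0` and `A^{n-1} = 0`. -/
def IsQuasiFiliform (M : ZinbielStr A) (n : ℕ) : Prop :=
  Module.finrank ℂ A = n ∧ M.lcs (n - 2) ≠ ⊥ ∧ M.lcs (n - 1) = ⊥
end ZinbielStr

/-!
A natural grading is generated in degree one: `A_{k+1} = A_1 ∘ A_k`. Counting dimensions,
`dim A_2 = 1`. The Zinbiel identity reads `a ∘ (b ∘ c + c ∘ b) = (a ∘ b) ∘ c`; if `b ∘ c + c ∘ b`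
were nonzero for some `b, c ∈ A_1`, it would span `A_2`, and `A_3 = A_1 ∘ A_2` would lie in the
image of the line `A_2` under right multiplication by `c`, contradicting `dim A_3 = 2`. So the
product on `A_1` is alternating, and the same identity then gives `A_2 ∘ A_1 = 0`. For any basis
`e₁, e₂` of `A_1`, the vectors `e₁ ∘ e₂`, `e₁ ∘ (e₁ ∘ e₂)`, `e₂ ∘ (e₁ ∘ e₂)` span `A_2` and `A_3`,
and all remaining products vanish for degree reasons.
-/

open Module Submodule

theorem iSupIndep.finrank_biSup {ι K V : Type*} [DivisionRing K] [AddCommGroup V]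
    [Module K V] [FiniteDimensional K V] {p : ι → Submodule K V} (hp : iSupIndep p)
    (s : Finset ι) : finrank K ↥(⨆ i ∈ s, p i) = ∑ i ∈ s, finrank K (p i) := by
  classical
  induction s using Finset.induction_on with
  | empty => simp
  | insert a s ha ih =>
    have hdisj : Disjoint (p a) (⨆ i ∈ s, p i) := by
      simpa using hp.disjoint_biSup (y := (s : Set ι)) ha
    rw [Finset.sum_insert ha, ← ih, ← Submodule.finrank_sup_add_finrank_inf_eq,
      hdisj.eq_bot, finrank_bot, add_zero, Finset.iSup_insert]

theorem Submodule.exists_eq_span_pair_of_finrank_eq_two {K V : Type*} [DivisionRing K]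
    [AddCommGroup V] [Module K V] {p : Submodule K V} (h : finrank K p = 2) :
    ∃ x ∈ p, ∃ y ∈ p, p = span K {x, y} := by
  have := Module.finite_of_finrank_eq_succ h
  set f := Module.finBasisOfFinrankEq K p h
  refine ⟨f 0, (f 0).2, f 1, (f 1).2, ?_⟩
  have := (span_val_image_eq_iff p _).2 f.span_eq
  rw [← Set.range_comp, Fin.range_fin_succ, Set.range_unique] at this
  exact this.symm

namespace ZinbielStr

variable {A : Type*} [AddCommGroup A] [Module ℂ A]

theorem zinbiel' (M : ZinbielStr A) (x y z : A) :
    M.mul (M.mul x y) z = M.mul x (M.mul y z + M.mul z y) := by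
  rw [map_add]
  exact M.zinbiel x y z

theorem lcs_add_two (M : ZinbielStr A) (k : ℕ) :
    M.lcs (k + 2) = map₂ M.mul ⊤ (M.lcs (k + 1)) := by
  rw [lcs, map₂_eq_span_image2]
  congr 1
  ext z
  simp [Set.image2, eq_comm]

def structureTable (e : Fin 5 → A) : Fin 5 → Fin 5 → A :=
  ![![0, e 2, e 3, 0, 0],
    ![-e 2, 0, e 4, 0, 0],
    ![0, 0, 0, 0, 0],
    ![0, 0, 0, 0, 0],
    ![0, 0, 0, 0, 0]]

def adaptedFamily (M : ZinbielStr A) (e₁ e₂ : A) : Fin 5 → A :=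
  ![e₁, e₂, M.mul e₁ e₂, M.mul e₁ (M.mul e₁ e₂), M.mul e₂ (M.mul e₁ e₂)]

namespace IsNaturalGrading

variable {M : ZinbielStr A} {t : ℕ} {Ag : ℕ → Submodule ℂ A}

theorem mul_eq_zero_of_lt_add (hg : M.IsNaturalGrading t Ag) {i j : ℕ} {x y : A}
    (hij : t < i + j) (hx : x ∈ Ag i) (hy : y ∈ Ag j) : M.mul x y = 0 := by
  simpa [hg.high_deg _ hij] using hg.mul_mem i j x y hx hy

theorem biSup_Icc_eq_top (hg : M.IsNaturalGrading t Ag) (ht : 1 ≤ t) :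
    ⨆ i ∈ Finset.Icc 1 t, Ag i = ⊤ := by
  refine top_le_iff.1 ?_
  rw [show (⊤ : Submodule ℂ A) = M.lcs 1 from rfl, hg.lcs_eq 1 le_rfl ht]
  refine iSup₂_le fun j hj => ?_
  by_cases hjt : j ≤ t
  · exact le_biSup Ag (Finset.mem_Icc.2 ⟨hj, hjt⟩)
  · simp [hg.high_deg j (by omega)]

theorem finrank_eq_sum [FiniteDimensional ℂ A] (hg : M.IsNaturalGrading t Ag) (ht : 1 ≤ t) :
    finrank ℂ A = ∑ i ∈ Finset.Icc 1 t, finrank ℂ (Ag i) := by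
  rw [← finrank_top, ← hg.biSup_Icc_eq_top ht, hg.indep.finrank_biSup]

theorem succ_eq_map₂ (hg : M.IsNaturalGrading t Ag) {k : ℕ} (hk : 1 ≤ k) (hkt : k + 1 ≤ t) :
    Ag (k + 1) = map₂ M.mul (Ag 1) (Ag k) := by
  set S := map₂ M.mul (Ag 1) (Ag k)
  set H := ⨆ j, ⨆ (_ : k + 2 ≤ j), Ag j
  have hS : S ≤ Ag (k + 1) := map₂_le.2 fun x hx y hy =>
    add_comm 1 k ▸ hg.mul_mem 1 k x y hx hy
  have hdisj : Disjoint (Ag (k + 1)) H := (hg.indep (k + 1)).mono_right <|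
    iSup₂_le fun j hj => le_iSup₂ (f := fun j (_ : j ≠ k + 1) => Ag j) j (by omega)
  have hle : Ag (k + 1) ≤ S ⊔ H := by
    obtain ⟨m, rfl⟩ : ∃ m, k = m + 1 := ⟨k - 1, by omega⟩
    calc Ag (m + 2) ≤ M.lcs (m + 2) := by
          rw [hg.lcs_eq (m + 2) (by omega) hkt]
          exact le_iSup₂ (f := fun j (_ : m + 2 ≤ j) => Ag j) (m + 2) le_rfl
      _ = map₂ M.mul (M.lcs 1) (M.lcs (m + 1)) := M.lcs_add_two m
      _ = ⨆ j, ⨆ (_ : m + 1 ≤ j), ⨆ i, ⨆ (_ : 1 ≤ i), map₂ M.mul (Ag i) (Ag j) := by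
          rw [hg.lcs_eq 1 le_rfl (by omega), hg.lcs_eq (m + 1) hk (by omega)]
          simp only [map₂_iSup_left, map₂_iSup_right]
      _ ≤ S ⊔ H := by
          refine iSup₂_le fun j hj => iSup₂_le fun i hi => map₂_le.2 fun x hx y hy => ?_
          by_cases hij : i = 1 ∧ j = m + 1
          · obtain ⟨rfl, rfl⟩ := hij
            exact mem_sup_left (apply_mem_map₂ _ hx hy)
          · refine mem_sup_right ?_
            exact le_iSup₂ (f := fun j (_ : m + 1 + 2 ≤ j) => Ag j) (i + j) (by omega)
              (hg.mul_mem i j x y hx hy)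
  calc Ag (k + 1) = (S ⊔ H) ⊓ Ag (k + 1) := (inf_eq_right.2 hle).symm
    _ = S := by rw [sup_inf_assoc_of_le H hS, hdisj.symm.eq_bot, sup_bot_eq]

theorem mul_add_mul_swap_eq_zero [FiniteDimensional ℂ A] (hg : M.IsNaturalGrading t Ag)
    (ht : 3 ≤ t) (h2 : finrank ℂ (Ag 2) ≤ 1) (h3 : 1 < finrank ℂ (Ag 3)) {b c : A}
    (hb : b ∈ Ag 1) (hc : c ∈ Ag 1) : M.mul b c + M.mul c b = 0 := by
  by_contra hw
  have hw2 : M.mul b c + M.mul c b ∈ Ag 2 :=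
    add_mem (hg.mul_mem 1 1 _ _ hb hc) (hg.mul_mem 1 1 _ _ hc hb)
  have hAg2 : Ag 2 = ℂ ∙ (M.mul b c + M.mul c b) :=
    (eq_of_le_of_finrank_le ((span_singleton_le_iff_mem _ _).2 hw2)
      (by rw [finrank_span_singleton hw]; exact h2)).symm
  have hAg3 : Ag 3 ≤ (Ag 2).map (M.mul.flip c) := by
    rw [hg.succ_eq_map₂ (k := 2) one_le_two ht, hAg2, map₂_span_singleton_eq_map_flip]
    rintro _ ⟨a, ha, rfl⟩
    exact ⟨M.mul a b, hAg2 ▸ hg.mul_mem 1 1 _ _ ha hb, M.zinbiel' a b c⟩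
  have := (finrank_mono hAg3).trans ((finrank_map_le _ _).trans h2)
  omega

theorem mul_eq_zero_of_mem_two_of_mem_one (hg : M.IsNaturalGrading t Ag) (ht : 2 ≤ t)
    (hanti : ∀ b ∈ Ag 1, ∀ c ∈ Ag 1, M.mul b c + M.mul c b = 0) {y c : A}
    (hy : y ∈ Ag 2) (hc : c ∈ Ag 1) : M.mul y c = 0 := by
  rw [hg.succ_eq_map₂ (k := 1) le_rfl ht] at hy
  refine (map₂_le (r := LinearMap.ker (M.mul.flip c)).2 fun a _ b hb => ?_) hy
  simp [zinbiel', hanti b hb c hc]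

variable {e₁ e₂ : A}

theorem adaptedFamily_mem (hg : M.IsNaturalGrading 3 Ag) (he₁ : e₁ ∈ Ag 1) (he₂ : e₂ ∈ Ag 1)
    (i : Fin 5) : M.adaptedFamily e₁ e₂ i ∈ Ag (![1, 1, 2, 3, 3] i) := by
  have he₃ := hg.mul_mem 1 1 _ _ he₁ he₂
  fin_cases i
  exacts [he₁, he₂, he₃, hg.mul_mem 1 2 _ _ he₁ he₃, hg.mul_mem 1 2 _ _ he₂ he₃]

theorem mul_adaptedFamily (hg : M.IsNaturalGrading 3 Ag)
    (hanti : ∀ b ∈ Ag 1, ∀ c ∈ Ag 1, M.mul b c + M.mul c b = 0)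
    (he₁ : e₁ ∈ Ag 1) (he₂ : e₂ ∈ Ag 1) (i j : Fin 5) :
    M.mul (M.adaptedFamily e₁ e₂ i) (M.adaptedFamily e₁ e₂ j) =
      structureTable (M.adaptedFamily e₁ e₂) i j := by
  have hmem := hg.adaptedFamily_mem he₁ he₂
  have hself : ∀ b ∈ Ag 1, M.mul b b = 0 := fun b hb =>
    (smul_eq_zero.1 ((two_smul ℂ _).trans (hanti b hb b hb))).resolve_left two_ne_zero
  fin_cases i <;> fin_cases j
  all_goals first
    | rfl
    | exact hg.mul_eq_zero_of_lt_add (by decide) (hmem _) (hmem _)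
    | exact hself _ he₁
    | exact hself _ he₂
    | exact eq_neg_of_add_eq_zero_right (hanti _ he₁ _ he₂)
    | exact hg.mul_eq_zero_of_mem_two_of_mem_one (by norm_num) hanti (hmem 2) he₁
    | exact hg.mul_eq_zero_of_mem_two_of_mem_one (by norm_num) hanti (hmem 2) he₂

theorem top_le_span_adaptedFamily (hg : M.IsNaturalGrading 3 Ag)
    (hanti : ∀ b ∈ Ag 1, ∀ c ∈ Ag 1, M.mul b c + M.mul c b = 0)
    (he₁ : e₁ ∈ Ag 1) (he₂ : e₂ ∈ Ag 1) (hspan : Ag 1 ≤ span ℂ {e₁, e₂}) :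
    ⊤ ≤ span ℂ (Set.range (M.adaptedFamily e₁ e₂)) := by
  have hmul := hg.mul_adaptedFamily hanti he₁ he₂
  set v := M.adaptedFamily e₁ e₂
  have h₁ : Ag 1 ≤ span ℂ {v 0, v 1} := hspan
  have h₂ : Ag 2 ≤ ℂ ∙ v 2 := by
    rw [hg.succ_eq_map₂ (k := 1) le_rfl (by norm_num)]
    refine (map₂_le_map₂ h₁ h₁).trans ?_
    rw [map₂_span_span, span_le, Set.image2_subset_iff]
    simp only [Set.forall_mem_insert, Set.mem_singleton_iff, forall_eq, hmul]
    exact ⟨⟨zero_mem _, mem_span_singleton_self _⟩,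
      neg_mem (mem_span_singleton_self _), zero_mem _⟩
  have h₃ : Ag 3 ≤ span ℂ {v 3, v 4} := by
    rw [hg.succ_eq_map₂ (k := 2) one_le_two le_rfl]
    refine (map₂_le_map₂ h₁ h₂).trans ?_
    rw [map₂_span_span, Set.image2_singleton_right, Set.image_pair]
    exact le_rfl
  have hv : ∀ i j, span ℂ {v i, v j} ≤ span ℂ (Set.range v) := fun i j =>
    span_mono (Set.pair_subset ⟨i, rfl⟩ ⟨j, rfl⟩)
  rw [← hg.biSup_Icc_eq_top (by norm_num)]
  refine iSup₂_le fun i hi => ?_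
  obtain ⟨hi₁, hi₃⟩ := Finset.mem_Icc.1 hi
  interval_cases i
  · exact h₁.trans (hv 0 1)
  · exact h₂.trans ((span_singleton_le_iff_mem _ _).2 (subset_span ⟨2, rfl⟩))
  · exact h₃.trans (hv 3 4)

end IsNaturalGrading

theorem dim5_type_three_classification {A : Type*} [AddCommGroup A] [Module ℂ A]
    [FiniteDimensional ℂ A] (M : ZinbielStr A)
    (Ag : ℕ → Submodule ℂ A)
    (hqf : M.IsQuasiFiliform 5) (hg : M.IsNaturalGrading 3 Ag)
    (h1 : Module.finrank ℂ (Ag 1) = 2) (h2 : Module.finrank ℂ (Ag 3) = 2) :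
    ∃ e : Module.Basis (Fin 5) ℂ A, ∀ i j : Fin 5,
      M.mul (e i) (e j) =
        ![![0, e 2, e 3, 0, 0],
           ![-e 2, 0, e 4, 0, 0],
           ![0, 0, 0, 0, 0],
           ![0, 0, 0, 0, 0],
           ![0, 0, 0, 0, 0]] i j := by
  obtain ⟨hA, -, -⟩ := hqf
  have hdim : finrank ℂ (Ag 2) = 1 := by
    have := hg.finrank_eq_sum (by norm_num)
    rw [show Finset.Icc 1 3 = {1, 2, 3} from rfl, Finset.sum_insert (by decide),
      Finset.sum_pair (by decide)] at this
    omega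
  have hanti : ∀ b ∈ Ag 1, ∀ c ∈ Ag 1, M.mul b c + M.mul c b = 0 := fun b hb c hc =>
    hg.mul_add_mul_swap_eq_zero le_rfl hdim.le (by omega) hb hc
  obtain ⟨e₁, he₁, e₂, he₂, hspan⟩ := exists_eq_span_pair_of_finrank_eq_two h1
  have hcard : Fintype.card (Fin 5) = finrank ℂ A := by rw [hA, Fintype.card_fin]
  refine ⟨basisOfTopLeSpanOfCardEqFinrank _
    (hg.top_le_span_adaptedFamily hanti he₁ he₂ hspan.le) hcard, fun i j => ?_⟩
  simp only [coe_basisOfTopLeSpanOfCardEqFinrank]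
  exact hg.mul_adaptedFamily hanti he₁ he₂ i j

end ZinbielStr
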